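/- arXiv:2304.12131 — 2 statements merged into one kernel-verified Lean document; each statement's English description precedes it below -/
import Mathlib

section
/- The power set 2^[n], partially ordered by S ≤ T iff |S| ≥ |T| and S^i ≤ T^i for all i ≤ |T|, is a lattice, where for k = min(|S|,|T|) the join is S ∨ T = {max(S^i,T^i) : 1 ≤ i ≤ k} and the meet is S ∧ T = {min(S^i,T^i) : 1 ≤ i ≤ k} ∪ (the elements S^{k+1},…,S^{|S|} if |S| ≥ |T|, or T^{k+1},…,T^{|T|} otherwise). -/
/-!
Both operations act coordinatewise on increasing enumerations. `galeMeet S T` is the image of the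
strictly increasing sequence `galeMeetSeq S T` of length `max |S| |T|` (the coordinatewise minimum
while both sets have an `i`-th element, then the tail of the longer set), and `galeJoin S T` is
the image of the strictly increasing sequence `i ↦ max S^i T^i` of length `min |S| |T|`. Hence
their cardinalities and `i`-th elements can be read off, and every lattice inequality reduces to
an inequality between minima and maxima of natural numbers.
-/

/-- The i-th smallest element (0-indexed) of a finite set of naturals. -/
def nth (S : Finset ℕ) (i : ℕ) : ℕ := (S.sort (· ≤ ·)).getD i 0

/-- The order on 2^[n]: S ≤ T iff |S| ≥ |T| and S^i ≤ T^i for i ≤ |T|. -/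
def gale (S T : Finset ℕ) : Prop :=
  T.card ≤ S.card ∧ ∀ i < T.card, nth S i ≤ nth T i

/-- |w|_N : number of occurrences in w of letters from N. -/
def wcount (w : List ℕ) (N : Finset ℕ) : ℕ := (w.filter (· ∈ N)).length

/-- A strictly increasing chain from S to T inside the order interval [S,T]. -/
def isChain (S T : Finset ℕ) (P : List (Finset ℕ)) : Prop :=
  P.head? = some S ∧ P.getLast? = some T ∧
  P.Chain' (fun A B => gale A B ∧ A ≠ B) ∧
  ∀ Q ∈ P, gale S Q ∧ gale Q T

/-- The join S ∨ T in 2^[n]. -/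
def galeJoin (S T : Finset ℕ) : Finset ℕ :=
  (Finset.range (min S.card T.card)).image fun i => max (nth S i) (nth T i)

/-- The meet S ∧ T in 2^[n]. -/
def galeMeet (S T : Finset ℕ) : Finset ℕ :=
  ((Finset.range (min S.card T.card)).image fun i => min (nth S i) (nth T i)) ∪
    (if T.card ≤ S.card then (Finset.Ico T.card S.card).image (nth S)
     else (Finset.Ico S.card T.card).image (nth T))

open Finset

lemma nth_eq_getElem {S : Finset ℕ} {i : ℕ} (h : i < S.card) :
    nth S i = (S.sort (· ≤ ·))[i]'(by rwa [length_sort]) :=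
  List.getD_eq_getElem _ _ _

lemma nth_mem {S : Finset ℕ} {i : ℕ} (h : i < S.card) : nth S i ∈ S := by
  rw [nth_eq_getElem h]
  exact (mem_sort _).1 (List.getElem_mem _)

lemma nth_lt_nth {S : Finset ℕ} {i j : ℕ} (hij : i < j) (hj : j < S.card) :
    nth S i < nth S j := by
  rw [nth_eq_getElem (hij.trans hj), nth_eq_getElem hj]
  exact S.sortedLT_sort.getElem_lt_getElem_iff.2 hij

lemma sort_image_range {m : ℕ} {g : ℕ → ℕ} (hg : StrictMonoOn g (Set.Iio m)) :
    ((range m).image g).sort (· ≤ ·) = (List.range m).map g := by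
  rw [← sort_val, image_val_of_injOn (by simpa using hg.injOn),
    ← Multiset.map_sort g _ (· ≤ ·) (· ≤ ·)]
  · simp
  · simp only [mem_val, mem_range]
    exact fun a ha b hb => (hg.le_iff_le ha hb).symm

lemma card_image_range {m : ℕ} {g : ℕ → ℕ} (hg : StrictMonoOn g (Set.Iio m)) :
    ((range m).image g).card = m := by
  rw [← length_sort (· ≤ ·), sort_image_range hg, List.length_map, List.length_range]

lemma nth_image_range {m : ℕ} {g : ℕ → ℕ} (hg : StrictMonoOn g (Set.Iio m)) {i : ℕ}
    (h : i < m) : nth ((range m).image g) i = g i := by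
  simp [nth, sort_image_range hg, h]

def galeMeetSeq (S T : Finset ℕ) (i : ℕ) : ℕ :=
  if i < S.card ∧ i < T.card then min (nth S i) (nth T i)
  else if i < S.card then nth S i else nth T i

lemma galeMeetSeq_strictMonoOn (S T : Finset ℕ) :
    StrictMonoOn (galeMeetSeq S T) (Set.Iio (max S.card T.card)) := by
  intro i _ j hj hij
  simp only [Set.mem_Iio] at hj
  have hS : j < S.card → nth S i < nth S j := nth_lt_nth hij
  have hT : j < T.card → nth T i < nth T j := nth_lt_nth hij
  unfold galeMeetSeq
  split_ifs <;> omega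

lemma galeMeet_eq_image_range (S T : Finset ℕ) :
    galeMeet S T = (range (max S.card T.card)).image (galeMeetSeq S T) := by
  rw [range_eq_Ico, ← Ico_union_Ico_eq_Ico (Nat.zero_le _) min_le_max, image_union,
    ← range_eq_Ico, galeMeet]
  congr 1
  · exact image_congr fun i hi => by simp_all [galeMeetSeq]
  · split_ifs with h
    · rw [min_eq_right h, max_eq_left h]
      exact image_congr fun i hi => by simp_all [galeMeetSeq]
    · rw [min_eq_left (by omega), max_eq_right (by omega)]
      exact image_congr fun i hi => by simp_all [galeMeetSeq]

lemma card_galeMeet (S T : Finset ℕ) : (galeMeet S T).card = max S.card T.card := by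
  rw [galeMeet_eq_image_range]
  exact card_image_range (galeMeetSeq_strictMonoOn S T)

lemma nth_galeMeet (S T : Finset ℕ) {i : ℕ} (h : i < max S.card T.card) :
    nth (galeMeet S T) i = galeMeetSeq S T i := by
  rw [galeMeet_eq_image_range]
  exact nth_image_range (galeMeetSeq_strictMonoOn S T) h

lemma galeJoin_strictMonoOn (S T : Finset ℕ) :
    StrictMonoOn (fun i => max (nth S i) (nth T i)) (Set.Iio (min S.card T.card)) := by
  intro i _ j hj hij
  simp only [Set.mem_Iio, lt_min_iff] at hj
  exact max_lt_max (nth_lt_nth hij hj.1) (nth_lt_nth hij hj.2)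

lemma card_galeJoin (S T : Finset ℕ) : (galeJoin S T).card = min S.card T.card :=
  card_image_range (galeJoin_strictMonoOn S T)

lemma nth_galeJoin (S T : Finset ℕ) {i : ℕ} (h : i < min S.card T.card) :
    nth (galeJoin S T) i = max (nth S i) (nth T i) :=
  nth_image_range (galeJoin_strictMonoOn S T) h

lemma galeMeetSeq_mem_union {S T : Finset ℕ} {i : ℕ} (h : i < max S.card T.card) :
    galeMeetSeq S T i ∈ S ∪ T := by
  unfold galeMeetSeq
  split_ifs with hST hS
  · rcases min_choice (nth S i) (nth T i) with he | he <;> rw [he]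
    · exact mem_union_left _ (nth_mem hST.1)
    · exact mem_union_right _ (nth_mem hST.2)
  · exact mem_union_left _ (nth_mem hS)
  · exact mem_union_right _ (nth_mem (by omega))

lemma galeMeet_subset_union (S T : Finset ℕ) : galeMeet S T ⊆ S ∪ T := by
  rw [galeMeet_eq_image_range, image_subset_iff]
  exact fun i hi => galeMeetSeq_mem_union (mem_range.1 hi)

lemma galeJoin_subset_union (S T : Finset ℕ) : galeJoin S T ⊆ S ∪ T := by
  rw [galeJoin, image_subset_iff]
  intro i hi
  rw [mem_range, lt_min_iff] at hi
  rcases max_choice (nth S i) (nth T i) with he | he <;> rw [he]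
  · exact mem_union_left _ (nth_mem hi.1)
  · exact mem_union_right _ (nth_mem hi.2)

lemma galeMeetSeq_le_left (S T : Finset ℕ) {i : ℕ} (h : i < S.card) :
    galeMeetSeq S T i ≤ nth S i := by
  unfold galeMeetSeq
  split_ifs <;> omega

lemma galeMeetSeq_le_right (S T : Finset ℕ) {i : ℕ} (h : i < T.card) :
    galeMeetSeq S T i ≤ nth T i := by
  unfold galeMeetSeq
  split_ifs <;> omega

lemma le_galeMeetSeq {S T : Finset ℕ} {i a : ℕ} (hS : i < S.card → a ≤ nth S i)
    (hT : i < T.card → a ≤ nth T i) (h : i < max S.card T.card) : a ≤ galeMeetSeq S T i := by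
  unfold galeMeetSeq
  split_ifs <;> omega

lemma galeMeet_gale_left (S T : Finset ℕ) : gale (galeMeet S T) S := by
  refine ⟨by rw [card_galeMeet]; exact le_max_left _ _, fun i hi => ?_⟩
  rw [nth_galeMeet S T (lt_max_of_lt_left hi)]
  exact galeMeetSeq_le_left S T hi

lemma galeMeet_gale_right (S T : Finset ℕ) : gale (galeMeet S T) T := by
  refine ⟨by rw [card_galeMeet]; exact le_max_right _ _, fun i hi => ?_⟩
  rw [nth_galeMeet S T (lt_max_of_lt_right hi)]
  exact galeMeetSeq_le_right S T hi

lemma gale_galeMeet {P S T : Finset ℕ} (hS : gale P S) (hT : gale P T) :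
    gale P (galeMeet S T) := by
  rw [gale, card_galeMeet]
  refine ⟨max_le hS.1 hT.1, fun i hi => ?_⟩
  rw [nth_galeMeet S T hi]
  exact le_galeMeetSeq (hS.2 i) (hT.2 i) hi

lemma gale_galeJoin_left (S T : Finset ℕ) : gale S (galeJoin S T) := by
  rw [gale, card_galeJoin]
  refine ⟨min_le_left _ _, fun i hi => ?_⟩
  rw [nth_galeJoin S T hi]
  exact le_max_left _ _

lemma gale_galeJoin_right (S T : Finset ℕ) : gale T (galeJoin S T) := by
  rw [gale, card_galeJoin]
  refine ⟨min_le_right _ _, fun i hi => ?_⟩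
  rw [nth_galeJoin S T hi]
  exact le_max_right _ _

lemma galeJoin_gale {Q S T : Finset ℕ} (hS : gale S Q) (hT : gale T Q) :
    gale (galeJoin S T) Q := by
  rw [gale, card_galeJoin]
  refine ⟨le_min hS.1 hT.1, fun i hi => ?_⟩
  rw [nth_galeJoin S T (lt_min (hi.trans_le hS.1) (hi.trans_le hT.1))]
  exact max_le (hS.2 i hi) (hT.2 i hi)

theorem stmt_4 (n : ℕ) (S T : Finset ℕ)
    (hS : S ⊆ Finset.Icc 1 n) (hT : T ⊆ Finset.Icc 1 n) :
    galeMeet S T ⊆ Finset.Icc 1 n ∧ galeJoin S T ⊆ Finset.Icc 1 n ∧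
    gale (galeMeet S T) S ∧ gale (galeMeet S T) T ∧
    (∀ P : Finset ℕ, P ⊆ Finset.Icc 1 n → gale P S → gale P T → gale P (galeMeet S T)) ∧
    gale S (galeJoin S T) ∧ gale T (galeJoin S T) ∧
    (∀ Q : Finset ℕ, Q ⊆ Finset.Icc 1 n → gale S Q → gale T Q → gale (galeJoin S T) Q) := by
  have hST : S ∪ T ⊆ Icc 1 n := union_subset hS hT
  exact ⟨(galeMeet_subset_union S T).trans hST, (galeJoin_subset_union S T).trans hST,
    galeMeet_gale_left S T, galeMeet_gale_right S T, fun _ _ => gale_galeMeet,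
    gale_galeJoin_left S T, gale_galeJoin_right S T, fun _ _ => galeJoin_gale⟩
end

section
/- Let S, T ⊆ {1,…,n} with |S| = |T|, S ≤ T, and suppose s ∈ S ∖ T and t ∈ T ∖ S correspond to the same position in the sorted enumerations of S ∖ T and T ∖ S (so s < t). Let N = (S ∖ {s}) ∪ {t}. Then S ≤ N ≤ T, and the order interval [S, N] has chain length t − s + 1. -/
/-! For sets of equal size, `A ≤ B` in the Gale order says that for every `x`, `B` has at most as
many elements below `x` as `A`. Trading `s` for `t` lowers the count of `S`
by one exactly on `(s, t]`, and because `s` and `t` are matching entries of `S \ T` and `T \ S`,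
`S` has strictly more elements there than `T`; hence `S ≤ N ≤ T`.

The element sum strictly increases along a strict chain of equal-size sets, and it rises by
`t - s` from `S` to `N`, which bounds the chain length. Conversely, while `A < N` one can move the
top `a` of a block of `A` (so `a + 1 ∉ A`) to `a + 1` and stay below `N`, a step raising the sum
by exactly one. -/

lemma nth_eq_nat_nth (A : Finset ℕ) : nth A = Nat.nth (· ∈ A) := by
  have hf : (Set.ofPred (· ∈ A)).Finite := A.finite_toSet
  ext i
  rw [Nat.nth_eq_getD_sort hf]
  simp [nth]

lemma image_nth_range_card (A : Finset ℕ) : (Finset.range A.card).image (nth A) = A := by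
  have hf : (Set.ofPred (· ∈ A)).Finite := A.finite_toSet
  apply Finset.coe_injective
  have := Nat.image_nth_Iio_card hf
  simp_all [nth_eq_nat_nth]

lemma injOn_nth (A : Finset ℕ) : Set.InjOn (nth A) (Finset.range A.card) := by
  have hf : (Set.ofPred (· ∈ A)).Finite := A.finite_toSet
  have := Nat.nth_injOn hf
  simp_all [nth_eq_nat_nth]

lemma nth_lt_iff_lt_count {A : Finset ℕ} {k : ℕ} (hk : k < A.card) (x : ℕ) :
    nth A k < x ↔ k < Nat.count (· ∈ A) x := by
  have hf : (Set.ofPred (· ∈ A)).Finite := A.finite_toSet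
  have hk' : k < hf.toFinset.card := by simpa using hk
  rw [nth_eq_nat_nth]
  refine ⟨fun h => ?_, Nat.nth_lt_of_lt_count⟩
  calc k = Nat.count (· ∈ A) (Nat.nth (· ∈ A) k) :=
        (Nat.count_nth_of_lt_card_finite hf hk').symm
    _ < Nat.count (· ∈ A) x := Nat.count_strict_mono (Nat.nth_mem_of_lt_card hf hk') h

lemma count_mem_le_card (A : Finset ℕ) (x : ℕ) : Nat.count (· ∈ A) x ≤ A.card := by
  have hf : (Set.ofPred (· ∈ A)).Finite := A.finite_toSet
  simpa using Nat.count_le_card hf x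

lemma nth_mem_s10 {A : Finset ℕ} {k : ℕ} (hk : k < A.card) : nth A k ∈ A := by
  have := Finset.mem_image_of_mem (nth A) (Finset.mem_range.2 hk)
  rwa [image_nth_range_card] at this

lemma eq_of_forall_nth_eq {A B : Finset ℕ} (hcard : A.card = B.card)
    (h : ∀ i < A.card, nth A i = nth B i) : A = B := by
  rw [← image_nth_range_card A, ← image_nth_range_card B, ← hcard]
  exact Finset.image_congr fun i hi => h i (Finset.mem_range.1 hi)

lemma sum_eq_sum_range_nth (A : Finset ℕ) :
    ∑ a ∈ A, a = ∑ i ∈ Finset.range A.card, nth A i := by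
  conv_lhs => rw [← image_nth_range_card A]
  exact Finset.sum_image (injOn_nth A)

lemma gale_refl (A : Finset ℕ) : gale A A := ⟨le_rfl, fun _ _ => le_rfl⟩

lemma gale_trans {A B C : Finset ℕ} (hAB : gale A B) (hBC : gale B C) : gale A C :=
  ⟨hBC.1.trans hAB.1, fun i hi => (hAB.2 i (hi.trans_le hBC.1)).trans (hBC.2 i hi)⟩

lemma sum_lt_sum_of_gale {A B : Finset ℕ} (hcard : A.card = B.card) (h : gale A B)
    (hne : A ≠ B) : ∑ a ∈ A, a < ∑ b ∈ B, b := by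
  rw [sum_eq_sum_range_nth, sum_eq_sum_range_nth, hcard]
  have hle : ∀ i ∈ Finset.range B.card, nth A i ≤ nth B i := fun i hi =>
    h.2 i (Finset.mem_range.1 hi)
  refine (Finset.sum_le_sum hle).lt_of_ne fun heq => hne (eq_of_forall_nth_eq hcard fun i hi => ?_)
  exact (Finset.sum_eq_sum_iff_of_le hle).1 heq i (Finset.mem_range.2 (hcard ▸ hi))

lemma gale_iff_count_le {A B : Finset ℕ} (hcard : A.card = B.card) :
    gale A B ↔ ∀ x, Nat.count (· ∈ B) x ≤ Nat.count (· ∈ A) x := by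
  refine ⟨fun h x => ?_, fun h => ⟨hcard.ge, fun k hk => ?_⟩⟩
  · by_contra! hlt
    have hkB : Nat.count (· ∈ A) x < B.card := hlt.trans_le (count_mem_le_card B x)
    have hA : nth A (Nat.count (· ∈ A) x) < x :=
      (h.2 _ hkB).trans_lt ((nth_lt_iff_lt_count hkB x).2 hlt)
    exact lt_irrefl _ ((nth_lt_iff_lt_count (hcard ▸ hkB) x).1 hA)
  · have hB := (nth_lt_iff_lt_count hk _).1 (Nat.lt_succ_self (nth B k))
    exact Nat.lt_succ_iff.1 ((nth_lt_iff_lt_count (hcard ▸ hk) _).2 (hB.trans_le (h _)))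

lemma gale_antisymm {A B : Finset ℕ} (hcard : A.card = B.card) (hAB : gale A B)
    (hBA : gale B A) : A = B :=
  eq_of_forall_nth_eq hcard fun i hi => le_antisymm (hAB.2 i (hcard ▸ hi)) (hBA.2 i hi)

lemma count_mem_inter_add_count_mem_sdiff (A B : Finset ℕ) (x : ℕ) :
    Nat.count (· ∈ A ∩ B) x + Nat.count (· ∈ A \ B) x = Nat.count (· ∈ A) x := by
  induction x with
  | zero => simp
  | succ x ih =>
    rw [Nat.count_succ, Nat.count_succ, Nat.count_succ]
    grind

lemma count_mem_insert_erase {A : Finset ℕ} {a b : ℕ} (ha : a ∈ A) (hb : b ∉ A) (x : ℕ) :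
    Nat.count (· ∈ insert b (A.erase a)) x + (if a < x then 1 else 0) =
      Nat.count (· ∈ A) x + (if b < x then 1 else 0) := by
  induction x with
  | zero => simp
  | succ x ih =>
    rw [Nat.count_succ, Nat.count_succ]
    grind

lemma card_insert_erase {A : Finset ℕ} {a b : ℕ} (ha : a ∈ A) (hb : b ∉ A) :
    (insert b (A.erase a)).card = A.card := by
  rw [Finset.card_insert_of_notMem fun h => hb (Finset.mem_of_mem_erase h),
    Finset.card_erase_add_one ha]

lemma sum_insert_erase_add {A : Finset ℕ} {a b : ℕ} (ha : a ∈ A) (hb : b ∉ A) :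
    ∑ x ∈ insert b (A.erase a), x + a = ∑ x ∈ A, x + b := by
  rw [Finset.sum_insert fun h => hb (Finset.mem_of_mem_erase h), add_assoc,
    Finset.sum_erase_add A (fun x => x) ha, add_comm]

lemma exists_mem_count_succ_lt {A N : Finset ℕ} {x : ℕ}
    (hx : Nat.count (· ∈ N) x < Nat.count (· ∈ A) x) :
    ∃ y ∈ A, Nat.count (· ∈ N) (y + 1) < Nat.count (· ∈ A) (y + 1) := by
  induction x with
  | zero => simp at hx
  | succ y ih =>
    by_cases hy : y ∈ A
    · exact ⟨y, hy, hx⟩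
    · refine ih (lt_of_le_of_lt (Nat.count_monotone _ y.le_succ) ?_)
      rwa [Nat.count_succ_eq_count_iff.2 hy] at hx

lemma exists_between_gale_sum_eq_add_one {A N : Finset ℕ} (hcard : A.card = N.card)
    (h : gale A N) (hne : A ≠ N) :
    ∃ B : Finset ℕ,
      B.card = A.card ∧ gale A B ∧ gale B N ∧ ∑ b ∈ B, b = ∑ a ∈ A, a + 1 := by
  have hle := (gale_iff_count_le hcard).1 h
  obtain ⟨x, hx⟩ : ∃ x, Nat.count (· ∈ N) x < Nat.count (· ∈ A) x := by
    by_contra! hge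
    exact hne (gale_antisymm hcard h ((gale_iff_count_le hcard.symm).2 hge))
  set D := A.filter fun y => Nat.count (· ∈ N) (y + 1) < Nat.count (· ∈ A) (y + 1)
  obtain ⟨a, haD, hmax⟩ : ∃ a ∈ D, ∀ y ∈ D, y ≤ a := by
    obtain ⟨y, hy, hlt⟩ := exists_mem_count_succ_lt hx
    have hD : D.Nonempty := ⟨y, Finset.mem_filter.2 ⟨hy, hlt⟩⟩
    exact ⟨D.max' hD, D.max'_mem hD, D.le_max'⟩
  obtain ⟨ha, hlta⟩ := Finset.mem_filter.1 haD
  have hsucc : a + 1 ∉ A := by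
    intro hmem
    have hA := (Nat.count_succ_eq_succ_count_iff (p := (· ∈ A))).2 hmem
    have hN := Nat.count_succ (· ∈ N) (a + 1)
    have : a + 1 ∈ D := Finset.mem_filter.2 ⟨hmem, by split_ifs at hN <;> omega⟩
    exact absurd (hmax _ this) (by omega)
  have hcount := count_mem_insert_erase ha hsucc
  have hcardB := card_insert_erase ha hsucc
  refine ⟨insert (a + 1) (A.erase a), hcardB, ?_, ?_, ?_⟩
  · refine (gale_iff_count_le hcardB.symm).2 fun x => ?_
    have hx := hcount x
    split_ifs at hx <;> omega
  · refine (gale_iff_count_le (hcardB.trans hcard)).2 fun x => ?_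
    have hx := hcount x
    have hNA := hle x
    rcases eq_or_ne x (a + 1) with rfl | hxa <;> split_ifs at hx <;> omega
  · have := sum_insert_erase_add ha hsucc
    omega

lemma isChain_singleton (A : Finset ℕ) : isChain A A [A] :=
  ⟨rfl, rfl, List.isChain_singleton _,
    fun _ hQ => List.mem_singleton.1 hQ ▸ ⟨gale_refl _, gale_refl _⟩⟩

lemma isChain_cons {A B N : Finset ℕ} {P : List (Finset ℕ)} (hAB : gale A B) (hne : A ≠ B)
    (hP : isChain B N P) : isChain A N (A :: P) := by
  obtain ⟨hhead, hlast, hchain, hmem⟩ := hP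
  obtain ⟨C, P, rfl⟩ : ∃ C P', P = C :: P' :=
    List.exists_cons_of_ne_nil (by rintro rfl; simp at hhead)
  obtain rfl : C = B := by simpa using hhead
  have hBN := (hmem _ List.mem_cons_self).2
  refine ⟨rfl, by rwa [List.getLast?_cons_cons], hchain.cons_cons ⟨hAB, hne⟩, ?_⟩
  rintro Q (_ | ⟨_, hQ⟩)
  · exact ⟨gale_refl _, gale_trans hAB hBN⟩
  · exact ⟨gale_trans hAB (hmem Q hQ).1, (hmem Q hQ).2⟩

lemma exists_isChain_length_of_gale {N : Finset ℕ} (d : ℕ) :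
    ∀ {A : Finset ℕ}, A.card = N.card → gale A N → ∑ a ∈ A, a + d = ∑ x ∈ N, x →
      ∃ P, isChain A N P ∧ P.length = d + 1 := by
  induction d with
  | zero =>
    intro A hcard h hsum
    obtain rfl : A = N := by
      by_contra hne
      have := sum_lt_sum_of_gale hcard h hne
      omega
    exact ⟨[A], isChain_singleton A, rfl⟩
  | succ d ih =>
    intro A hcard h hsum
    obtain ⟨B, hBcard, hAB, hBN, hBsum⟩ :=
      exists_between_gale_sum_eq_add_one hcard h (by rintro rfl; omega)
    obtain ⟨P, hP, hlen⟩ := ih (hBcard.trans hcard) hBN (by omega)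
    have hne : A ≠ B := by rintro rfl; omega
    exact ⟨A :: P, isChain_cons hAB hne hP, by simp [hlen]⟩

lemma List.IsChain.head_add_length_le {l : List ℕ} (h : l.IsChain (· < ·)) {a b : ℕ}
    (ha : l.head? = some a) (hb : l.getLast? = some b) : a + l.length ≤ b + 1 := by
  induction l generalizing a with
  | nil => simp at ha
  | cons x l ih =>
    obtain rfl : x = a := by simpa using ha
    cases l with
    | nil => simp_all
    | cons y l =>
      rw [List.isChain_cons_cons] at h
      have := ih h.2 rfl (by rwa [List.getLast?_cons_cons] at hb)
      simp only [List.length_cons] at this ⊢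
      omega

lemma isChain.sum_add_length_le {A N : Finset ℕ} {P : List (Finset ℕ)} (hP : isChain A N P)
    (hcard : A.card = N.card) : ∑ a ∈ A, a + P.length ≤ ∑ x ∈ N, x + 1 := by
  obtain ⟨hhead, hlast, hchain, hmem⟩ := hP
  have hcardQ : ∀ Q ∈ P, Q.card = N.card := fun Q hQ =>
    le_antisymm (hcard ▸ (hmem Q hQ).1.1) (hmem Q hQ).2.1
  have hsums : (P.map fun Q => ∑ x ∈ Q, x).IsChain (· < ·) :=
    List.isChain_map_of_isChain _ (fun _ _ h => sum_lt_sum_of_gale h.1 h.2.1 h.2.2)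
      (List.IsChain.imp_of_mem_imp (S := fun X Y => X.card = Y.card ∧ gale X Y ∧ X ≠ Y)
        (fun X Y hX hY h => ⟨(hcardQ X hX).trans (hcardQ Y hY).symm, h⟩) hchain)
  have := hsums.head_add_length_le (a := ∑ a ∈ A, a) (b := ∑ x ∈ N, x)
    (by simp [List.head?_map, hhead]) (by simp [List.getLast?_map, hlast])
  rwa [List.length_map] at this

lemma count_mem_lt_count_mem_of_nth_sdiff {A B : Finset ℕ} {i x : ℕ} (hAB : i < (A \ B).card)
    (hBA : i < (B \ A).card) (hlt : nth (A \ B) i < x) (hle : x ≤ nth (B \ A) i) :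
    Nat.count (· ∈ B) x < Nat.count (· ∈ A) x := by
  have hA := count_mem_inter_add_count_mem_sdiff A B x
  have hB := count_mem_inter_add_count_mem_sdiff B A x
  rw [Finset.inter_comm] at hB
  have h1 := (nth_lt_iff_lt_count hAB x).1 hlt
  have h2 := mt (nth_lt_iff_lt_count hBA x).2 hle.not_gt
  omega

lemma nth_sdiff_lt_nth_sdiff {S T : Finset ℕ} (hcard : S.card = T.card) (hST : gale S T) {i : ℕ}
    (hi : i < (S \ T).card) : nth (S \ T) i < nth (T \ S) i := by
  have hi' : i < (T \ S).card := Finset.card_sdiff_comm hcard ▸ hi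
  have hne : nth (S \ T) i ≠ nth (T \ S) i := fun h =>
    (Finset.mem_sdiff.1 (nth_mem_s10 hi)).2 (h ▸ (Finset.mem_sdiff.1 (nth_mem_s10 hi')).1)
  refine lt_of_le_of_ne (not_lt.1 fun hlt => ?_) hne
  exact ((gale_iff_count_le hcard).1 hST _).not_gt
    (count_mem_lt_count_mem_of_nth_sdiff hi' hi (Nat.lt_succ_self _) hlt)

theorem stmt_10_general (S T : Finset ℕ)
    (hcard : S.card = T.card) (hST : gale S T) (s t i : ℕ)
    (hi : i < (S \ T).card)
    (his : nth (S \ T) i = s) (hit : nth (T \ S) i = t) :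
    s < t ∧ gale S (S.erase s ∪ {t}) ∧ gale (S.erase s ∪ {t}) T ∧
    ((∃ P : List (Finset ℕ), isChain S (S.erase s ∪ {t}) P ∧ P.length = t - s + 1) ∧
      ∀ P : List (Finset ℕ), isChain S (S.erase s ∪ {t}) P → P.length ≤ t - s + 1) := by
  have hi' : i < (T \ S).card := Finset.card_sdiff_comm hcard ▸ hi
  have hsS : s ∈ S := his ▸ (Finset.mem_sdiff.1 (nth_mem_s10 hi)).1
  have htS : t ∉ S := hit ▸ (Finset.mem_sdiff.1 (nth_mem_s10 hi')).2
  have hst : s < t := his ▸ hit ▸ nth_sdiff_lt_nth_sdiff hcard hST hi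
  have hTS := (gale_iff_count_le hcard).1 hST
  rw [Finset.union_singleton]
  have hcardN := card_insert_erase hsS htS
  have hcount := count_mem_insert_erase hsS htS
  have hSN : gale S (insert t (S.erase s)) := (gale_iff_count_le hcardN.symm).2 fun x => by
    have hx := hcount x
    split_ifs at hx <;> omega
  have hNT : gale (insert t (S.erase s)) T :=
    (gale_iff_count_le (hcardN.trans hcard)).2 fun x => by
      have hx := hcount x
      have hTSx := hTS x
      split_ifs at hx with hsx htx <;> try omega
      have := count_mem_lt_count_mem_of_nth_sdiff hi hi' (his ▸ hsx) (by rw [hit]; omega)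
      omega
  have hsum := sum_insert_erase_add hsS htS
  refine ⟨hst, hSN, hNT, exists_isChain_length_of_gale (t - s) hcardN.symm hSN (by omega),
    fun P hP => ?_⟩
  have := hP.sum_add_length_le hcardN.symm
  omega

theorem stmt_10 (n : ℕ) (S T : Finset ℕ)
    (hS : S ⊆ Finset.Icc 1 n) (hT : T ⊆ Finset.Icc 1 n)
    (hcard : S.card = T.card) (hST : gale S T) (s t i : ℕ)
    (hs : s ∈ S \ T) (ht : t ∈ T \ S) (hi : i < (S \ T).card)
    (his : nth (S \ T) i = s) (hit : nth (T \ S) i = t) :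
    s < t ∧ gale S (S.erase s ∪ {t}) ∧ gale (S.erase s ∪ {t}) T ∧
    ((∃ P : List (Finset ℕ), isChain S (S.erase s ∪ {t}) P ∧ P.length = t - s + 1) ∧
      ∀ P : List (Finset ℕ), isChain S (S.erase s ∪ {t}) P → P.length ≤ t - s + 1) :=
  stmt_10_general S T hcard hST s t i hi his hit
end
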